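/- arXiv:0805.2481 — 3 statements merged into one kernel-verified Lean document; each statement's English description precedes it below -/
import Mathlib

section
/- In G = H_1(q) ⋊ Sp(2,q), the set H_1(q) \ Z(H_1(q)) of non-central Heisenberg elements forms a single conjugacy class of G, of size q(q² − 1). -/
/-!
Conjugating `h_{(w,z)}` by `h_{(u,0)}` adds the symplectic form `ω(u, w)` to `z`
(this is where `2 ≠ 0`, i.e. `q` odd, enters), and `ω(·, w)` is onto `F` when `w ≠ 0`; so all
`h_{(w,z)}` with fixed `w ≠ 0` are conjugate. Conjugating by `s ∈ SL(2,q) = Sp(2,q)` replaces `w`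
by `s w`, and `SL(2,q)` is transitive on nonzero vectors. The class has one element for each of
the `(q² − 1) q` pairs `(w, z)` with `w ≠ 0`.
-/

/-- The Heisenberg group `H₁(q)`: pairs `(w, z)` with `w ∈ F²`, `z ∈ F`. -/
@[ext]
structure Heis (F : Type*) where
  w : Fin 2 → F
  z : F

namespace Heis

variable {F : Type*} [Field F]

instance : Mul (Heis F) :=
  ⟨fun p q => ⟨p.w + q.w, p.z + q.z + (p.w 0 * q.w 1 - p.w 1 * q.w 0) / 2⟩⟩

@[simp] lemma mul_w (p q : Heis F) : (p * q).w = p.w + q.w := rfl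
@[simp] lemma mul_z (p q : Heis F) :
    (p * q).z = p.z + q.z + (p.w 0 * q.w 1 - p.w 1 * q.w 0) / 2 := rfl

instance : One (Heis F) := ⟨⟨0, 0⟩⟩

@[simp] lemma one_w : (1 : Heis F).w = 0 := rfl
@[simp] lemma one_z : (1 : Heis F).z = 0 := rfl

instance : Inv (Heis F) := ⟨fun p => ⟨-p.w, -p.z⟩⟩

@[simp] lemma inv_w (p : Heis F) : p⁻¹.w = -p.w := rfl
@[simp] lemma inv_z (p : Heis F) : p⁻¹.z = -p.z := rfl

instance instGroup : Group (Heis F) where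
  mul_assoc a b c := by
    ext <;> simp [Pi.add_apply] <;> ring
  one_mul a := by ext <;> simp
  mul_one a := by ext <;> simp
  inv_mul_cancel a := by
    ext
    · simp
    · show -a.z + a.z + ((-a.w) 0 * a.w 1 - (-a.w) 1 * a.w 0) / 2 = 0
      simp only [Pi.neg_apply]
      ring

end Heis

open Matrix SemidirectProduct

abbrev SL2 (F : Type*) [Field F] := Matrix.SpecialLinearGroup (Fin 2) F

/-- The element `g_{(s,w,z)} = s · h_{(w,z)}` of `G = H₁(q) ⋊ Sp(2,q)`. -/
def gel {F : Type*} [Field F] (φ : SL2 F →* MulAut (Heis F))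
    (s : SL2 F) (w : Fin 2 → F) (z : F) : Heis F ⋊[φ] SL2 F :=
  SemidirectProduct.inr s * SemidirectProduct.inl ⟨w, z⟩

lemma exists_mul_sub_mul_eq {F : Type*} [Field F] {w : Fin 2 → F} (hw : w ≠ 0) (c : F) :
    ∃ u : Fin 2 → F, w 0 * u 1 - w 1 * u 0 = c := by
  by_cases h0 : w 0 = 0
  · have h1 : w 1 ≠ 0 := fun h1 => hw (funext fun i => by fin_cases i <;> assumption)
    exact ⟨![-c / w 1, 0], by simp [h0]; field_simp⟩
  · exact ⟨![0, c / w 0], by simp; field_simp⟩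

namespace Heis

variable {F : Type*} [Field F]

lemma mul_mul_inv_eq (h2 : (2 : F) ≠ 0) (v h : Heis F) :
    v * h * v⁻¹ = ⟨h.w, h.z + (v.w 0 * h.w 1 - v.w 1 * h.w 0)⟩ := by
  ext
  · simp
  · simp only [mul_z, mul_w, inv_w, inv_z, Pi.add_apply, Pi.neg_apply]
    field_simp
    ring

lemma isConj_of_w_eq (h2 : (2 : F) ≠ 0) {w : Fin 2 → F} (hw : w ≠ 0) (z z' : F) :
    IsConj (⟨w, z⟩ : Heis F) ⟨w, z'⟩ := by
  obtain ⟨u, hu⟩ := exists_mul_sub_mul_eq hw (z - z')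
  refine isConj_iff.mpr ⟨⟨u, 0⟩, ?_⟩
  rw [mul_mul_inv_eq h2]
  ext
  · rfl
  · simp only
    linear_combination -hu

end Heis

lemma SL2.exists_mulVec_eq {F : Type*} [Field F] {w : Fin 2 → F} (hw : w ≠ 0) :
    ∃ s : SL2 F, (s : Matrix (Fin 2) (Fin 2) F) *ᵥ ![1, 0] = w := by
  obtain ⟨u, hu⟩ := exists_mul_sub_mul_eq hw 1
  refine ⟨⟨!![w 0, u 0; w 1, u 1], by rw [det_fin_two_of, ← hu]; ring⟩, ?_⟩
  ext i
  fin_cases i <;> simp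

lemma Heis.card_setOf_w_ne_zero {F : Type*} [Zero F] [Fintype F] :
    Nat.card {p : Heis F | p.w ≠ 0} = (Fintype.card F ^ 2 - 1) * Fintype.card F := by
  classical
  let e : {p : Heis F | p.w ≠ 0} ≃ {w : Fin 2 → F | w ≠ 0} × F :=
    { toFun p := (⟨p.1.w, p.2⟩, p.1.z)
      invFun x := ⟨⟨x.1, x.2⟩, x.1.2⟩
      left_inv _ := rfl
      right_inv _ := rfl }
  rw [Nat.card_congr e, Nat.card_prod, Nat.card_eq_fintype_card, Nat.card_eq_fintype_card,
    Set.card_ne_eq, Fintype.card_fun, Fintype.card_fin]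

section SemidirectProduct

variable {F : Type*} [Field F] {φ : SL2 F →* MulAut (Heis F)}

lemma gel_one_eq_inl (w : Fin 2 → F) (z : F) : gel φ 1 w z = inl ⟨w, z⟩ := by
  simp [gel]

lemma isConj_inl_mulVec
    (hφ : ∀ (s : SL2 F) (w : Fin 2 → F) (z : F),
      φ s ⟨w, z⟩ = ⟨(s : Matrix (Fin 2) (Fin 2) F) *ᵥ w, z⟩)
    (s : SL2 F) (w : Fin 2 → F) (z : F) :
    IsConj (inl ⟨w, z⟩ : Heis F ⋊[φ] SL2 F) (inl ⟨(s : Matrix (Fin 2) (Fin 2) F) *ᵥ w, z⟩) :=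
  isConj_iff.mpr ⟨inr s, by rw [← map_inv, ← inl_aut, hφ]⟩

lemma isConj_inl_of_w_ne_zero (h2 : (2 : F) ≠ 0)
    (hφ : ∀ (s : SL2 F) (w : Fin 2 → F) (z : F),
      φ s ⟨w, z⟩ = ⟨(s : Matrix (Fin 2) (Fin 2) F) *ᵥ w, z⟩)
    {w w' : Fin 2 → F} (hw : w ≠ 0) (hw' : w' ≠ 0) (z z' : F) :
    IsConj (inl ⟨w, z⟩ : Heis F ⋊[φ] SL2 F) (inl ⟨w', z'⟩) := by
  obtain ⟨s, rfl⟩ := SL2.exists_mulVec_eq hw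
  obtain ⟨s', rfl⟩ := SL2.exists_mulVec_eq hw'
  have hz := (inl : Heis F →* Heis F ⋊[φ] SL2 F).map_isConj (Heis.isConj_of_w_eq h2 hw z z')
  exact hz.trans ((isConj_inl_mulVec hφ s _ z').symm.trans (isConj_inl_mulVec hφ s' _ z'))

end SemidirectProduct

/-- In `G = H₁(q) ⋊ Sp(2,q)`, the set `H₁(q) \ Z(H₁(q))` of non-central
Heisenberg elements forms a single conjugacy class of `G`, of size `q(q²−1)`. -/
theorem noncentral_heisenberg_single_class {F : Type*} [Field F] [Fintype F]
    (q : ℕ) (hF : Fintype.card F = q) (hq : Odd q)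
    (φ : SL2 F →* MulAut (Heis F))
    (hφ : ∀ (s : SL2 F) (w : Fin 2 → F) (z : F),
      φ s ⟨w, z⟩ = ⟨(s : Matrix (Fin 2) (Fin 2) F).mulVec w, z⟩) :
    (∀ (w w' : Fin 2 → F) (z z' : F), w ≠ 0 → w' ≠ 0 →
      IsConj (gel φ 1 w z) (gel φ 1 w' z')) ∧
    Nat.card {g : Heis F ⋊[φ] SL2 F | ∃ (w : Fin 2 → F) (z : F), w ≠ 0 ∧ g = gel φ 1 w z} =
      q * (q ^ 2 - 1) := by
  have h2 : (2 : F) ≠ 0 := Ring.two_ne_zero <| by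
    rw [Ne, FiniteField.even_card_iff_char_two, hF, Nat.odd_iff.mp hq]
    exact one_ne_zero
  have hset : {g : Heis F ⋊[φ] SL2 F | ∃ (w : Fin 2 → F) (z : F), w ≠ 0 ∧ g = gel φ 1 w z} =
      inl '' {p : Heis F | p.w ≠ 0} := by
    ext g
    simp only [gel_one_eq_inl, Set.mem_ofPred_eq, Set.mem_image]
    constructor
    · rintro ⟨w, z, hw, rfl⟩
      exact ⟨⟨w, z⟩, hw, rfl⟩
    · rintro ⟨⟨w, z⟩, hw, rfl⟩
      exact ⟨w, z, hw, rfl⟩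
  refine ⟨fun w w' z z' hw hw' => ?_, ?_⟩
  · rw [gel_one_eq_inl, gel_one_eq_inl]
    exact isConj_inl_of_w_ne_zero h2 hφ hw hw' z z'
  · rw [hset, Nat.card_image_of_injective inl_injective, Heis.card_setOf_w_ne_zero, hF,
      Nat.mul_comm]
end

section
/- Let g = g_{(s,0,z)} ∈ G = H_1(q) ⋊ Sp(2,q) where s ∈ Sp(2,q) does not have eigenvalue 1. Then the centralizer of g in G equals {g_{(s₁,0,z₁)} : s₁ ∈ C_{Sp(2,q)}(s), z₁ ∈ GF(q)}, so |C_G(g)| = q·|C_{Sp(2,q)}(s)|. -/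
open Matrix SemidirectProduct

theorem SemidirectProduct.mem_centralizer_singleton_mk_iff {N G : Type*} [Group N] [Group G]
    {φ : G →* MulAut N} {c : N} (hc : c ∈ Subgroup.center N) (hφc : ∀ g, φ g c = c) (t : G)
    (x : N ⋊[φ] G) :
    x ∈ Subgroup.centralizer {⟨c, t⟩} ↔
      x.right ∈ Subgroup.centralizer {t} ∧ φ t x.left = x.left := by
  simp only [Subgroup.mem_centralizer_singleton_iff, SemidirectProduct.ext_iff, mul_left,
    mul_right, hφc, Subgroup.mem_center_iff.mp hc x.left, mul_right_inj]
  exact and_comm.trans (and_congr_right fun _ => eq_comm)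

theorem Heis.mk_zero_mem_center {F : Type*} [Field F] (z : F) :
    (⟨0, z⟩ : Heis F) ∈ Subgroup.center (Heis F) :=
  Subgroup.mem_center_iff.mpr fun p => by ext <;> simp [add_comm]

section MatrixAction

variable {F : Type*} [Field F] {φ : SL2 F →* MulAut (Heis F)}

def IsMatrixAction (φ : SL2 F →* MulAut (Heis F)) : Prop :=
  ∀ (s : SL2 F) (w : Fin 2 → F) (z : F), φ s ⟨w, z⟩ = ⟨(s : Matrix (Fin 2) (Fin 2) F) *ᵥ w, z⟩

theorem IsMatrixAction.apply_eq_self_iff (hφ : IsMatrixAction φ) (t : SL2 F) (n : Heis F) :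
    φ t n = n ↔ (t : Matrix (Fin 2) (Fin 2) F) *ᵥ n.w = n.w := by
  rw [hφ, Heis.ext_iff]
  exact and_iff_left rfl

theorem gel_zero (hφ : IsMatrixAction φ) (s : SL2 F) (z : F) : gel φ s 0 z = ⟨⟨0, z⟩, s⟩ := by
  rw [gel, mul_def]
  simp only [left_inr, right_inr, left_inl, right_inl, one_mul, mul_one, hφ s 0 z, mulVec_zero]

theorem mem_centralizer_gel_zero_iff (hφ : IsMatrixAction φ)
    {s : SL2 F} (hs : ∀ w : Fin 2 → F, (s : Matrix (Fin 2) (Fin 2) F) *ᵥ w = w → w = 0)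
    (z : F) (g : Heis F ⋊[φ] SL2 F) :
    g ∈ Subgroup.centralizer {gel φ s 0 z} ↔
      ∃ (s₁ : SL2 F) (z₁ : F), s₁ ∈ Subgroup.centralizer {s} ∧ g = gel φ s₁ 0 z₁ := by
  have hφ_center (t : SL2 F) : φ t ⟨0, z⟩ = ⟨0, z⟩ :=
    (hφ.apply_eq_self_iff t _).mpr (mulVec_zero _)
  obtain ⟨⟨w₁, z₁⟩, s₁⟩ := g
  simp only [gel_zero hφ,
    SemidirectProduct.mem_centralizer_singleton_mk_iff (Heis.mk_zero_mem_center z) hφ_center,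
    hφ.apply_eq_self_iff, SemidirectProduct.ext_iff, Heis.mk.injEq]
  constructor
  · rintro ⟨hc, hw⟩
    exact ⟨s₁, z₁, hc, ⟨hs w₁ hw, rfl⟩, rfl⟩
  · rintro ⟨_, _, hc, ⟨rfl, rfl⟩, rfl⟩
    exact ⟨hc, mulVec_zero _⟩

theorem card_centralizer_gel_zero (hφ : IsMatrixAction φ)
    {s : SL2 F} (hs : ∀ w : Fin 2 → F, (s : Matrix (Fin 2) (Fin 2) F) *ᵥ w = w → w = 0)
    (z : F) :
    Nat.card (Subgroup.centralizer {gel φ s 0 z}) =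
      Nat.card F * Nat.card (Subgroup.centralizer {s}) := by
  let f (p : F × Subgroup.centralizer {s}) : Heis F ⋊[φ] SL2 F := gel φ p.2 0 p.1
  have hf : Function.Injective f := by
    rintro ⟨z₁, s₁⟩ ⟨z₂, s₂⟩ h
    simp only [f, gel_zero hφ, SemidirectProduct.ext_iff, Heis.ext_iff] at h
    exact Prod.ext h.1.2 (Subtype.ext h.2)
  have hrange : Set.range f = Subgroup.centralizer {gel φ s 0 z} := by
    ext g
    simp only [f, Set.mem_range, Prod.exists, Subtype.exists, exists_prop, SetLike.mem_coe,
      mem_centralizer_gel_zero_iff hφ hs]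
    exact exists_comm.trans (exists_congr fun _ => exists_congr fun _ => and_congr_right' eq_comm)
  rw [← Nat.card_prod, ← Nat.card_range_of_injective hf, hrange]
  rfl

end MatrixAction

theorem centralizer_of_no_eigenvalue_one_general {F : Type*} [Field F] [Fintype F]
    (q : ℕ) (hF : Fintype.card F = q)
    (φ : SL2 F →* MulAut (Heis F))
    (hφ : ∀ (s : SL2 F) (w : Fin 2 → F) (z : F),
      φ s ⟨w, z⟩ = ⟨(s : Matrix (Fin 2) (Fin 2) F).mulVec w, z⟩)
    (s : SL2 F) (hs : ∀ w : Fin 2 → F, (s : Matrix (Fin 2) (Fin 2) F).mulVec w = w → w = 0)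
    (z : F) :
    (∀ g : Heis F ⋊[φ] SL2 F,
      g ∈ Subgroup.centralizer {gel φ s 0 z} ↔
        ∃ (s₁ : SL2 F) (z₁ : F), s₁ ∈ Subgroup.centralizer {s} ∧ g = gel φ s₁ 0 z₁) ∧
    Nat.card (Subgroup.centralizer {gel φ s 0 z} : Subgroup (Heis F ⋊[φ] SL2 F)) =
      q * Nat.card (Subgroup.centralizer {s} : Subgroup (SL2 F)) := by
  rw [card_centralizer_gel_zero hφ hs, Nat.card_eq_fintype_card, hF]
  exact ⟨mem_centralizer_gel_zero_iff hφ hs z, rfl⟩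

/-- Let `g = g_{(s,0,z)} ∈ G = H₁(q) ⋊ Sp(2,q)` where `s ∈ Sp(2,q)` does not
have eigenvalue 1.  Then `C_G(g) = {g_{(s₁,0,z₁)} : s₁ ∈ C_{Sp(2,q)}(s), z₁ ∈ GF(q)}`,
so `|C_G(g)| = q · |C_{Sp(2,q)}(s)|`. -/
theorem centralizer_of_no_eigenvalue_one {F : Type*} [Field F] [Fintype F]
    (q : ℕ) (hF : Fintype.card F = q) (hq : Odd q)
    (φ : SL2 F →* MulAut (Heis F))
    (hφ : ∀ (s : SL2 F) (w : Fin 2 → F) (z : F),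
      φ s ⟨w, z⟩ = ⟨(s : Matrix (Fin 2) (Fin 2) F).mulVec w, z⟩)
    (s : SL2 F) (hs : ∀ w : Fin 2 → F, (s : Matrix (Fin 2) (Fin 2) F).mulVec w = w → w = 0)
    (z : F) :
    (∀ g : Heis F ⋊[φ] SL2 F,
      g ∈ Subgroup.centralizer {gel φ s 0 z} ↔
        ∃ (s₁ : SL2 F) (z₁ : F), s₁ ∈ Subgroup.centralizer {s} ∧ g = gel φ s₁ 0 z₁) ∧
    Nat.card (Subgroup.centralizer {gel φ s 0 z} : Subgroup (Heis F ⋊[φ] SL2 F)) =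
      q * Nat.card (Subgroup.centralizer {s} : Subgroup (SL2 F)) :=
  centralizer_of_no_eigenvalue_one_general q hF φ hφ s hs z
end

section
/- Let s = [[1,0],[ε,1]] ∈ Sp(2,q) with ε ≠ 0 and w = (ν^m, 0)ᵀ with ν^m ≠ 0, and let g = g_{(s,w,0)} ∈ G = H_1(q) ⋊ Sp(2,q). Then |C_G(g)| = q², so the conjugacy class of g has size q²(q² − 1). -/
open Matrix SemidirectProduct

/-! Write `g = (h, s)` with `h = ((c, εc), 0)`. An element `((w, z), t)` commutes with `g` iff
`t` commutes with the transvection `s` and the Heisenberg components of the two products agree.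
Commuting with `s` makes `t` lower triangular with equal diagonal entries; the first
coordinate of `w + t (c, εc) = (c, εc) + s w` then forces
`t = [[1, 0], [εw₀/c, 1]]`, and the central coordinate determines `w₁` from `w₀` (dividing by
`2`, which is where `q` odd enters). So the centralizer is parametrised by `(w₀, z) ∈ F²`, and
orbit–stabilizer together with `|G| = q³ · q(q² − 1)` gives the size of the class. -/

theorem SemidirectProduct.commute_iff {N G : Type*} [Group N] [Group G] {ψ : G →* MulAut N}
    {x y : N ⋊[ψ] G} :
    Commute x y ↔
      Commute x.right y.right ∧ x.left * ψ x.right y.left = y.left * ψ y.right x.left := by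
  rw [Commute, SemiconjBy, SemidirectProduct.ext_iff, and_comm]
  rfl

theorem card_conjugatesOf_mul_card_centralizer {G : Type*} [Group G] (g : G) :
    Nat.card (conjugatesOf g) * Nat.card (Subgroup.centralizer {g}) = Nat.card G := by
  have horbit : conjugatesOf g = MulAction.orbit (ConjAct G) g := by
    ext x
    rw [ConjAct.mem_orbit_conjAct, isConj_comm]
    rfl
  rw [horbit, Nat.card_coe_set_eq, ← MulAction.index_stabilizer, mul_comm,
    ConjAct.stabilizer_eq_centralizer]
  exact (Subgroup.centralizer {ConjAct.toConjAct g}).card_mul_index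

theorem Matrix.SpecialLinearGroup.toGL_range {n R : Type*} [Fintype n] [DecidableEq n]
    [CommRing R] : (toGL : SpecialLinearGroup n R →* GL n R).range =
      (GeneralLinearGroup.det : GL n R →* Rˣ).ker :=
  SetLike.coe_injective (by rw [MonoidHom.coe_range, range_toGL]; rfl)

theorem Matrix.card_SL_mul_card_units {n F : Type*} [Fintype n] [DecidableEq n] [Nonempty n]
    [Field F] [Fintype F] :
    Nat.card (SpecialLinearGroup n F) * (Fintype.card F - 1) = Nat.card (GL n F) := by
  rw [← Nat.card_eq_fintype_card, ← Nat.card_units, ← Subgroup.card_top (G := Fˣ),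
    ← MonoidHom.range_eq_top.mpr (GeneralLinearGroup.det_surjective (n := n)),
    ← Subgroup.index_ker,
    Nat.card_congr (MonoidHom.ofInjective SpecialLinearGroup.toGL_injective).toEquiv,
    SpecialLinearGroup.toGL_range]
  exact Subgroup.card_mul_index _

theorem Matrix.card_SL_two {F : Type*} [Field F] [Fintype F] :
    Nat.card (SpecialLinearGroup (Fin 2) F) = Fintype.card F * (Fintype.card F ^ 2 - 1) := by
  have h := card_SL_mul_card_units (n := Fin 2) (F := F)
  rw [card_GL_field, Fin.prod_univ_two] at h
  have hq : 1 < Fintype.card F := Fintype.one_lt_card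
  refine Nat.eq_of_mul_eq_mul_right (Nat.sub_pos_of_lt hq) (h.trans ?_)
  simp only [Fin.val_zero, Fin.val_one, pow_zero, pow_one]
  rw [show Fintype.card F ^ 2 - Fintype.card F = Fintype.card F * (Fintype.card F - 1) by
    rw [sq, Nat.mul_sub_one]]
  ring

theorem Matrix.commute_lowerTriangular_iff {F : Type*} [Field F] {ε : F} (hε : ε ≠ 0)
    (M : Matrix (Fin 2) (Fin 2) F) :
    Commute M !![1, 0; ε, 1] ↔ M 0 1 = 0 ∧ M 1 1 = M 0 0 := by
  rw [commute_iff_eq, eta_fin_two M, mul_fin_two, mul_fin_two, ← Matrix.ext_iff]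
  simp +contextual [Fin.forall_fin_two, hε, mul_comm ε, add_comm (M 1 0)]

theorem Heis.card (F : Type*) [Finite F] : Nat.card (Heis F) = Nat.card F ^ 3 := by
  let e : Heis F ≃ (Fin 2 → F) × F :=
    ⟨fun h => (h.w, h.z), fun p => ⟨p.1, p.2⟩, fun _ => rfl, fun _ => rfl⟩
  rw [Nat.card_congr e, Nat.card_prod, Nat.card_fun, Nat.card_fin]
  ring

section Centralizer

variable {F : Type*} [Field F]

def lowerTransvection (t : F) : SL2 F := ⟨!![1, 0; t, 1], by simp [det_fin_two_of]⟩

def centralizerElt (φ : SL2 F →* MulAut (Heis F)) (ε c u z : F) : Heis F ⋊[φ] SL2 F :=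
  ⟨⟨![u, ε * u * (u + c) / (2 * c)], z⟩, lowerTransvection (ε * u / c)⟩

theorem gel_eq_mk (φ : SL2 F →* MulAut (Heis F)) (s : SL2 F) (w : Fin 2 → F) (z : F) :
    gel φ s w z = ⟨φ s ⟨w, z⟩, s⟩ := by
  ext <;> simp [gel]

variable {φ : SL2 F →* MulAut (Heis F)}
  (hφ : ∀ (s : SL2 F) (w : Fin 2 → F) (z : F),
    φ s ⟨w, z⟩ = ⟨(s : Matrix (Fin 2) (Fin 2) F).mulVec w, z⟩)
  {ε c : F} {s : SL2 F} (hs : (s : Matrix (Fin 2) (Fin 2) F) = !![1, 0; ε, 1])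
  (h2 : (2 : F) ≠ 0) (hε : ε ≠ 0) (hc : c ≠ 0)
include hφ hs h2 hε hc

theorem commute_gel_iff (w : Fin 2 → F) (z : F) (t : SL2 F) :
    Commute (⟨⟨w, z⟩, t⟩ : Heis F ⋊[φ] SL2 F) (gel φ s ![c, 0] 0) ↔
      (t : Matrix (Fin 2) (Fin 2) F) = !![1, 0; ε * w 0 / c, 1] ∧
        w 1 = ε * w 0 * (w 0 + c) / (2 * c) := by
  have hts : Commute t s ↔ Commute (t : Matrix (Fin 2) (Fin 2) F) s := Subtype.ext_iff
  rw [SemidirectProduct.commute_iff, gel_eq_mk]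
  dsimp only
  rw [hφ, hφ, hφ, hts, hs, commute_lowerTriangular_iff hε, Heis.ext_iff, funext_iff,
    Fin.forall_fin_two, ← Matrix.ext_iff, Fin.forall_fin_two, Fin.forall_fin_two,
    Fin.forall_fin_two]
  simp only [Heis.mul_w, Heis.mul_z, Pi.add_apply, mulVec, dotProduct, Fin.sum_univ_two,
    of_apply, cons_val_zero, cons_val_one, cons_val_fin_one, cons_val', mul_zero, add_zero,
    zero_add, add_right_inj]
  set M := (t : Matrix (Fin 2) (Fin 2) F)
  constructor
  · rintro ⟨⟨h01, h11⟩, ⟨hw0, hw1⟩, hz⟩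
    have h00 : M 0 0 = 1 := mul_right_cancel₀ hc (by linear_combination hw0 - c * ε * h01)
    have h10 : M 1 0 * c = ε * w 0 := by linear_combination hw1 - c * ε * h11 - c * ε * h00
    rw [h11, h00, h01, div_left_inj' h2] at hz
    refine ⟨⟨⟨h00, h01⟩, eq_div_of_mul_eq hc h10, h11.trans h00⟩, ?_⟩
    rw [eq_div_iff (mul_ne_zero h2 hc)]
    linear_combination (-1) * hz + w 0 * h10
  · rintro ⟨⟨⟨h00, h01⟩, h10, h11⟩, hw1⟩
    rw [h00, h01, h10, h11, hw1]
    refine ⟨⟨rfl, rfl⟩, ⟨by ring, ?_⟩, ?_⟩ <;> field_simp <;> ring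

theorem mem_centralizer_gel_iff (x : Heis F ⋊[φ] SL2 F) :
    x ∈ Subgroup.centralizer {gel φ s ![c, 0] 0} ↔
      x = centralizerElt φ ε c (x.left.w 0) x.left.z := by
  obtain ⟨⟨w, z⟩, t⟩ := x
  rw [Subgroup.mem_centralizer_singleton_iff, ← commute_iff_eq,
    commute_gel_iff hφ hs h2 hε hc]
  simp only [centralizerElt, SemidirectProduct.ext_iff, Heis.mk.injEq, and_true]
  rw [and_comm]
  exact and_congr (by simp [funext_iff, Fin.forall_fin_two])
    (Subtype.ext_iff (a1 := t) (a2 := lowerTransvection _)).symm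

theorem card_centralizer_gel [Fintype F] :
    Nat.card (Subgroup.centralizer {gel φ s ![c, 0] 0}) = Fintype.card F ^ 2 := by
  have hmem := mem_centralizer_gel_iff hφ hs h2 hε hc
  let e : Subgroup.centralizer {gel φ s ![c, 0] 0} ≃ F × F :=
    { toFun x := (x.1.left.w 0, x.1.left.z)
      invFun p := ⟨centralizerElt φ ε c p.1 p.2, (hmem _).2 rfl⟩
      left_inv x := Subtype.ext ((hmem _).1 x.2).symm
      right_inv _ := rfl }
  rw [Nat.card_congr e, Nat.card_prod, Nat.card_eq_fintype_card, sq]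

end Centralizer

/-- Let `s = [[1,0],[ε,1]] ∈ Sp(2,q)` with `ε ≠ 0` and `w = (νᵐ, 0)ᵀ` with
`νᵐ ≠ 0`, and let `g = g_{(s,w,0)} ∈ G = H₁(q) ⋊ Sp(2,q)`.  Then `|C_G(g)| = q²`,
so the conjugacy class of `g` has size `q²(q² − 1)`. -/
theorem centralizer_transvection_class {F : Type*} [Field F] [Fintype F]
    (q : ℕ) (hF : Fintype.card F = q) (hq : Odd q)
    (φ : SL2 F →* MulAut (Heis F))
    (hφ : ∀ (s : SL2 F) (w : Fin 2 → F) (z : F),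
      φ s ⟨w, z⟩ = ⟨(s : Matrix (Fin 2) (Fin 2) F).mulVec w, z⟩)
    (ε : F) (hε : ε ≠ 0) (c : F) (hc : c ≠ 0)
    (s : SL2 F) (hs : (s : Matrix (Fin 2) (Fin 2) F) = !![1, 0; ε, 1]) :
    Nat.card (Subgroup.centralizer {gel φ s ![c, 0] 0} : Subgroup (Heis F ⋊[φ] SL2 F)) =
      q ^ 2 ∧
    Nat.card {x : Heis F ⋊[φ] SL2 F | IsConj (gel φ s ![c, 0] 0) x} =
      q ^ 2 * (q ^ 2 - 1) := by
  have h2 : (2 : F) ≠ 0 := Ring.two_ne_zero fun hchar => by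
    rw [FiniteField.even_card_iff_char_two, hF] at hchar
    exact Nat.odd_iff.not.mpr (by omega) hq
  have hC : Nat.card (Subgroup.centralizer {gel φ s ![c, 0] 0}) = q ^ 2 :=
    hF ▸ card_centralizer_gel hφ hs h2 hε hc
  have hG : Nat.card (Heis F ⋊[φ] SL2 F) = q ^ 2 * (q ^ 2 * (q ^ 2 - 1)) := by
    rw [SemidirectProduct.card, Heis.card, Matrix.card_SL_two, Nat.card_eq_fintype_card, hF]
    ring
  have hclass := card_conjugatesOf_mul_card_centralizer (gel φ s ![c, 0] 0)
  rw [hC, hG, mul_comm] at hclass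
  exact ⟨hC, Nat.eq_of_mul_eq_mul_left (pow_pos hq.pos 2) hclass⟩
end
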